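/- Fix integers J and J₀ with 1 ≤ J₀ ≤ J − 2, let 𝒵 = {z : Fin J | z = 0 ∨ J₀ ≤ z} with base point 0 ∈ 𝒵, and for j ∈ Fin J let 𝒵(j) = 𝒵 if j < J₀ and 𝒵(j) = {z ∈ 𝒵 | z ≠ j} if J₀ ≤ j. Let P be a Borel probability measure on ℝ × Fin J × 𝒵, with coordinates written (Y, D, Z), such that P(Z = z) > 0 for every z ∈ 𝒵. Then the following are equivalent: (i) for every family of Borel sets B j z ⊆ ℝ (j ∈ Fin J, z ∈ 𝒵(j)) such that for each j the sets B j z for z ∈ 𝒵(j) are pairwise disjoint with union ℝ, one has ∑_{j ∈ Fin J} ∑_{z ∈ 𝒵(j)} P(Y ∈ B j z, D = j, Z = z) / P(Z = z) ≤ 1 (division taken in [0,∞]); (ii) for every Borel set B ⊆ ℝ, every j ∈ Fin J, and every k ∈ 𝒵 with J₀ ≤ k and k ≠ j (as elements of Fin J), P(Y ∈ B, D = j, Z = k) / P(Z = k) ≤ P(Y ∈ B, D = j, Z = 0) / P(Z = 0). -/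
import Mathlib


open MeasureTheory

/-- The instrument set `𝒵 = {z : Fin J | z = 0 ∨ J₀ ≤ z}`. -/
abbrev Zcal (J J₀ : ℕ) : Type := {z : Fin J // (z : ℕ) = 0 ∨ J₀ ≤ (z : ℕ)}

/-- Membership in `𝒵(j)`: all of `𝒵` if `j < J₀`, and `𝒵 \ {j}` if `J₀ ≤ j`. -/
abbrev memZj (J J₀ : ℕ) (j : Fin J) (z : Zcal J J₀) : Prop :=
  (j : ℕ) < J₀ ∨ (z : Fin J) ≠ j

lemma meas_set {J J₀ : ℕ} (B : Set ℝ) (hB : MeasurableSet B) (j : Fin J) (z : Zcal J J₀) :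
    MeasurableSet {x : ℝ × Fin J × Zcal J J₀ | x.1 ∈ B ∧ x.2.1 = j ∧ x.2.2 = z} := by
  have : {x : ℝ × Fin J × Zcal J J₀ | x.1 ∈ B ∧ x.2.1 = j ∧ x.2.2 = z}
      = B ×ˢ (({j} : Set (Fin J)) ×ˢ ({z} : Set (Zcal J J₀))) := by
    ext x
    simp only [Set.mem_prod, Set.mem_singleton_iff, Set.mem_setOf_eq]
  rw [this]
  exact hB.prod ((measurableSet_singleton j).prod (measurableSet_singleton z))

lemma sum_over_j {J J₀ : ℕ} (P : Measure (ℝ × Fin J × Zcal J J₀)) (z : Zcal J J₀) :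
    ∑ j : Fin J, P {x : ℝ × Fin J × Zcal J J₀ | x.2.1 = j ∧ x.2.2 = z}
      = P {x : ℝ × Fin J × Zcal J J₀ | x.2.2 = z} := by
  have hu : (⋃ j ∈ (Finset.univ : Finset (Fin J)),
      {x : ℝ × Fin J × Zcal J J₀ | x.2.1 = j ∧ x.2.2 = z})
      = {x : ℝ × Fin J × Zcal J J₀ | x.2.2 = z} := by
    ext x; simp
  rw [← hu, measure_biUnion_finset]
  · intro a _ b _ hab
    refine Set.disjoint_left.mpr fun x hx hx' => hab ?_
    rw [← hx.1, ← hx'.1]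
  · intro j _
    have : {x : ℝ × Fin J × Zcal J J₀ | x.2.1 = j ∧ x.2.2 = z}
        = {x : ℝ × Fin J × Zcal J J₀ | x.1 ∈ (Set.univ : Set ℝ) ∧ x.2.1 = j ∧ x.2.2 = z} := by
      ext x; simp
    rw [this]; exact meas_set _ MeasurableSet.univ j z

set_option maxHeartbeats 1000000 in
/-- the inequality-family equivalence underlying Corollary 2 of the
paper (case J₀ > 0), with an outcome variable. -/
theorem stmt_13 (J J₀ : ℕ) (hJ₀ : 1 ≤ J₀) (hJ : J₀ + 2 ≤ J)
    (P : Measure (ℝ × Fin J × Zcal J J₀)) [IsProbabilityMeasure P]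
    (hpos : ∀ z : Zcal J J₀, 0 < P {x | x.2.2 = z}) :
    (∀ B : Fin J → Zcal J J₀ → Set ℝ,
      (∀ j z, MeasurableSet (B j z)) →
      (∀ j : Fin J, ∀ z z' : Zcal J J₀, memZj J J₀ j z → memZj J J₀ j z' →
        z ≠ z' → Disjoint (B j z) (B j z')) →
      (∀ j : Fin J, (⋃ z ∈ {z : Zcal J J₀ | memZj J J₀ j z}, B j z) = Set.univ) →
      ∑ j : Fin J, ∑ z ∈ Finset.univ.filter (fun z : Zcal J J₀ => memZj J J₀ j z),
        P {x : ℝ × Fin J × Zcal J J₀ | x.1 ∈ B j z ∧ x.2.1 = j ∧ x.2.2 = z}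
          / P {x : ℝ × Fin J × Zcal J J₀ | x.2.2 = z} ≤ 1) ↔
    (∀ B : Set ℝ, MeasurableSet B → ∀ j : Fin J, ∀ k : Zcal J J₀,
      J₀ ≤ ((k : Fin J) : ℕ) → (k : Fin J) ≠ j →
      P {x : ℝ × Fin J × Zcal J J₀ | x.1 ∈ B ∧ x.2.1 = j ∧ x.2.2 = k}
          / P {x : ℝ × Fin J × Zcal J J₀ | x.2.2 = k}
        ≤ P {x : ℝ × Fin J × Zcal J J₀ |
              x.1 ∈ B ∧ x.2.1 = j ∧ x.2.2 = ⟨⟨0, by omega⟩, Or.inl rfl⟩}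
          / P {x : ℝ × Fin J × Zcal J J₀ | x.2.2 = ⟨⟨0, by omega⟩, Or.inl rfl⟩}) := by
  have hJ' : 0 < J := by omega
  set Z0 : Zcal J J₀ := ⟨⟨0, by omega⟩, Or.inl rfl⟩ with hZ0def
  set p := P {x : ℝ × Fin J × Zcal J J₀ | x.2.2 = Z0} with hpdef
  have hp0 : p ≠ 0 := (hpos Z0).ne'
  have hpt : p ≠ ⊤ := measure_ne_top P _
  have hmemZ0 : ∀ j' : Fin J, memZj J J₀ j' Z0 := by
    intro j'
    by_cases h : (j' : ℕ) < J₀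
    · exact Or.inl h
    · refine Or.inr fun he => ?_
      have : (j' : ℕ) = 0 := by rw [← he]
      omega
  constructor
  · intro H B hB j k hk hkj
    have hkZ0 : k ≠ Z0 := by
      intro h
      rw [h] at hk
      have h0 : ((Z0 : Fin J) : ℕ) = 0 := rfl
      omega
    have hZ0k : Z0 ≠ k := hkZ0.symm
    classical
    set Bf : Fin J → Zcal J J₀ → Set ℝ := fun j' z =>
      if j' = j then (if z = k then B else if z = Z0 then Bᶜ else ∅)
      else (if z = Z0 then Set.univ else ∅) with hBfdef
    have hBf_j : ∀ z : Zcal J J₀, Bf j z = if z = k then B else if z = Z0 then Bᶜ else ∅ := by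
      intro z; simp [hBfdef]
    have hBf_ne : ∀ j' : Fin J, j' ≠ j → ∀ z : Zcal J J₀,
        Bf j' z = if z = Z0 then Set.univ else ∅ := by
      intro j' hj' z; rw [hBfdef]; simp [hj']
    have hBfm : ∀ j' z, MeasurableSet (Bf j' z) := by
      intro j' z
      rcases eq_or_ne j' j with h1 | h1
      · subst h1
        rw [hBf_j]
        split
        · exact hB
        · split
          · exact hB.compl
          · exact MeasurableSet.empty
      · rw [hBf_ne j' h1]
        split
        · exact MeasurableSet.univ
        · exact MeasurableSet.empty
    have hBfd : ∀ j' : Fin J, ∀ z z' : Zcal J J₀, memZj J J₀ j' z → memZj J J₀ j' z' →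
        z ≠ z' → Disjoint (Bf j' z) (Bf j' z') := by
      intro j' z z' _ _ hzz'
      rcases eq_or_ne j' j with h1 | h1
      · subst h1
        rw [hBf_j, hBf_j]
        split_ifs <;>
          first
            | exact disjoint_compl_right
            | exact disjoint_compl_left
            | exact disjoint_bot_right
            | exact disjoint_bot_left
            | simp_all
      · rw [hBf_ne j' h1, hBf_ne j' h1]
        split_ifs <;>
          first
            | exact disjoint_bot_right
            | exact disjoint_bot_left
            | simp_all
    have hBfc : ∀ j' : Fin J, (⋃ z ∈ {z : Zcal J J₀ | memZj J J₀ j' z}, Bf j' z)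
        = Set.univ := by
      intro j'
      ext y
      simp only [Set.mem_iUnion, Set.mem_univ, iff_true, Set.mem_setOf_eq]
      by_cases hj' : j' = j
      · subst hj'
        by_cases hy : y ∈ B
        · exact ⟨k, Or.inr hkj, by rw [hBf_j]; simp [hy]⟩
        · exact ⟨Z0, hmemZ0 _, by rw [hBf_j]; simp [hZ0k, hy]⟩
      · exact ⟨Z0, hmemZ0 _, by rw [hBf_ne j' hj']; simp⟩
    have key := H Bf hBfm hBfd hBfc
    -- abbreviations
    set a := P {x : ℝ × Fin J × Zcal J J₀ | x.1 ∈ B ∧ x.2.1 = j ∧ x.2.2 = k} with hadef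
    set c := P {x : ℝ × Fin J × Zcal J J₀ | x.2.2 = k} with hcdef
    set b := P {x : ℝ × Fin J × Zcal J J₀ | x.1 ∈ B ∧ x.2.1 = j ∧ x.2.2 = Z0} with hbdef
    set t := P {x : ℝ × Fin J × Zcal J J₀ | x.2.1 = j ∧ x.2.2 = Z0} with htdef
    have hbt : b ≤ t := measure_mono fun x hx => ⟨hx.2.1, hx.2.2⟩
    have htp : t ≤ p := measure_mono fun x hx => hx.2
    -- compute the inner sum at j' = j
    have hinnerj : ∑ z ∈ Finset.univ.filter (fun z : Zcal J J₀ => memZj J J₀ j z),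
        P {x : ℝ × Fin J × Zcal J J₀ | x.1 ∈ Bf j z ∧ x.2.1 = j ∧ x.2.2 = z}
          / P {x : ℝ × Fin J × Zcal J J₀ | x.2.2 = z} = a / c + (t - b) / p := by
      rw [Finset.sum_eq_add_of_mem k Z0
        (Finset.mem_filter.mpr ⟨Finset.mem_univ _, Or.inr hkj⟩)
        (Finset.mem_filter.mpr ⟨Finset.mem_univ _, hmemZ0 j⟩) hkZ0]
      · have h1 : Bf j k = B := by rw [hBf_j]; simp
        have h2 : Bf j Z0 = Bᶜ := by rw [hBf_j]; simp [hZ0k]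
        have h3 : P {x : ℝ × Fin J × Zcal J J₀ | x.1 ∈ Bᶜ ∧ x.2.1 = j ∧ x.2.2 = Z0}
            = t - b := by
          have hsplit : b + P {x : ℝ × Fin J × Zcal J J₀ |
              x.1 ∈ Bᶜ ∧ x.2.1 = j ∧ x.2.2 = Z0} = t := by
            rw [hbdef, ← measure_union ?_ (meas_set Bᶜ hB.compl j Z0)]
            · congr 1; ext x
              simp only [Set.mem_union, Set.mem_setOf_eq, Set.mem_compl_iff]
              constructor
              · rintro (h | h) <;> exact ⟨h.2.1, h.2.2⟩
              · intro h
                by_cases hx : x.1 ∈ B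
                · exact Or.inl ⟨hx, h.1, h.2⟩
                · exact Or.inr ⟨hx, h.1, h.2⟩
            · refine Set.disjoint_left.mpr fun x hx hx' => hx'.1 hx.1
          exact ENNReal.eq_sub_of_add_eq (measure_ne_top P _)
            (by rw [add_comm] at hsplit; exact hsplit)
        rw [h1, h2, h3]
      · intro z hz hzz
        have : Bf j z = ∅ := by rw [hBf_j]; simp [hzz.1, hzz.2]
        rw [this]
        have : {x : ℝ × Fin J × Zcal J J₀ | x.1 ∈ (∅ : Set ℝ) ∧ x.2.1 = j ∧ x.2.2 = z}
            = ∅ := by ext x; simp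
        rw [this, measure_empty, ENNReal.zero_div]
    -- compute the inner sum at j' ≠ j
    have hinnerne : ∀ j' : Fin J, j' ≠ j →
        ∑ z ∈ Finset.univ.filter (fun z : Zcal J J₀ => memZj J J₀ j' z),
        P {x : ℝ × Fin J × Zcal J J₀ | x.1 ∈ Bf j' z ∧ x.2.1 = j' ∧ x.2.2 = z}
          / P {x : ℝ × Fin J × Zcal J J₀ | x.2.2 = z}
        = P {x : ℝ × Fin J × Zcal J J₀ | x.2.1 = j' ∧ x.2.2 = Z0} / p := by
      intro j' hj'
      rw [Finset.sum_eq_single_of_mem Z0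
        (Finset.mem_filter.mpr ⟨Finset.mem_univ _, hmemZ0 j'⟩)]
      · have h1 : Bf j' Z0 = Set.univ := by simp [hBfdef, hj']
        have h2 : {x : ℝ × Fin J × Zcal J J₀ | x.1 ∈ Set.univ ∧ x.2.1 = j' ∧ x.2.2 = Z0}
            = {x : ℝ × Fin J × Zcal J J₀ | x.2.1 = j' ∧ x.2.2 = Z0} := by
          ext x; simp
        rw [h1, h2]
      · intro z _ hzz
        have : Bf j' z = ∅ := by rw [hBf_ne j' hj']; simp [hzz]
        rw [this]
        have : {x : ℝ × Fin J × Zcal J J₀ | x.1 ∈ (∅ : Set ℝ) ∧ x.2.1 = j' ∧ x.2.2 = z}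
            = ∅ := by ext x; simp
        rw [this, measure_empty, ENNReal.zero_div]
    -- rewrite the whole sum
    have hsum_erase : ∑ j' ∈ Finset.univ.erase j,
        P {x : ℝ × Fin J × Zcal J J₀ | x.2.1 = j' ∧ x.2.2 = Z0} = p - t := by
      have := Finset.sum_erase_add Finset.univ
        (fun j' => P {x : ℝ × Fin J × Zcal J J₀ | x.2.1 = j' ∧ x.2.2 = Z0})
        (Finset.mem_univ j)
      rw [sum_over_j P Z0] at this
      exact ENNReal.eq_sub_of_add_eq (measure_ne_top P _) this
    have hkey2 : a / c + ((t - b) / p + (p - t) / p) ≤ 1 := by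
      calc a / c + ((t - b) / p + (p - t) / p)
          = ∑ j' : Fin J, ∑ z ∈ Finset.univ.filter (fun z : Zcal J J₀ => memZj J J₀ j' z),
            P {x : ℝ × Fin J × Zcal J J₀ | x.1 ∈ Bf j' z ∧ x.2.1 = j' ∧ x.2.2 = z}
              / P {x : ℝ × Fin J × Zcal J J₀ | x.2.2 = z} := by
            rw [← Finset.sum_erase_add Finset.univ _ (Finset.mem_univ j), hinnerj]
            have : ∑ j' ∈ Finset.univ.erase j,
                ∑ z ∈ Finset.univ.filter (fun z : Zcal J J₀ => memZj J J₀ j' z),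
                P {x : ℝ × Fin J × Zcal J J₀ | x.1 ∈ Bf j' z ∧ x.2.1 = j' ∧ x.2.2 = z}
                  / P {x : ℝ × Fin J × Zcal J J₀ | x.2.2 = z}
                = (p - t) / p := by
              rw [Finset.sum_congr rfl (fun j' hj' =>
                hinnerne j' (Finset.ne_of_mem_erase hj'))]
              rw [← hsum_erase]
              simp_rw [div_eq_mul_inv, ← Finset.sum_mul]
            rw [this]
            ring
        _ ≤ 1 := key
    -- conclude
    have hcomb : (t - b) / p + (p - t) / p = (p - b) / p := by
      rw [ENNReal.div_add_div_same, add_comm, tsub_add_tsub_cancel htp hbt]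
    rw [hcomb] at hkey2
    have h1 : a / c ≤ 1 - (p - b) / p :=
      ENNReal.le_sub_of_add_le_right
        ((ENNReal.div_lt_top (by simpa using (tsub_le_self.trans_lt hpt.lt_top).ne) hp0).ne)
        hkey2
    refine h1.trans ?_
    rw [tsub_le_iff_right, ENNReal.div_add_div_same, add_tsub_cancel_of_le (hbt.trans htp),
      ENNReal.div_self hp0 hpt]
  · intro H B hBm hBd hBc
    have step1 : ∀ j : Fin J,
        ∀ z ∈ Finset.univ.filter (fun z : Zcal J J₀ => memZj J J₀ j z),
        P {x : ℝ × Fin J × Zcal J J₀ | x.1 ∈ B j z ∧ x.2.1 = j ∧ x.2.2 = z}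
          / P {x : ℝ × Fin J × Zcal J J₀ | x.2.2 = z}
        ≤ P {x : ℝ × Fin J × Zcal J J₀ | x.1 ∈ B j z ∧ x.2.1 = j ∧ x.2.2 = Z0} / p := by
      intro j z hz
      by_cases hzZ : z = Z0
      · subst hzZ; exact le_rfl
      · have hk : J₀ ≤ ((z : Fin J) : ℕ) := by
          rcases z.2 with h | h
          · exfalso; apply hzZ; apply Subtype.ext; apply Fin.ext; exact h
          · exact h
        have hzj : (z : Fin J) ≠ j := by
          rcases (Finset.mem_filter.mp hz).2 with h | h
          · intro he
            rw [he] at hk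
            omega
          · exact h
        exact H (B j z) (hBm j z) j z hk hzj
    calc ∑ j : Fin J, ∑ z ∈ Finset.univ.filter (fun z : Zcal J J₀ => memZj J J₀ j z),
        P {x : ℝ × Fin J × Zcal J J₀ | x.1 ∈ B j z ∧ x.2.1 = j ∧ x.2.2 = z}
          / P {x : ℝ × Fin J × Zcal J J₀ | x.2.2 = z}
        ≤ ∑ j : Fin J, ∑ z ∈ Finset.univ.filter (fun z : Zcal J J₀ => memZj J J₀ j z),
          P {x : ℝ × Fin J × Zcal J J₀ | x.1 ∈ B j z ∧ x.2.1 = j ∧ x.2.2 = Z0} / p :=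
        Finset.sum_le_sum fun j _ => Finset.sum_le_sum (step1 j)
      _ = ∑ j : Fin J, P {x : ℝ × Fin J × Zcal J J₀ | x.2.1 = j ∧ x.2.2 = Z0} / p := by
        refine Finset.sum_congr rfl fun j _ => ?_
        simp_rw [div_eq_mul_inv, ← Finset.sum_mul]
        congr 1
        rw [← measure_biUnion_finset]
        · congr 1
          ext x
          simp only [Set.mem_iUnion, Set.mem_setOf_eq, Finset.mem_filter, Finset.mem_univ,
            true_and, exists_prop]
          constructor
          · rintro ⟨z, _, h⟩; exact ⟨h.2.1, h.2.2⟩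
          · intro hx
            have := hBc j
            have hx1 : x.1 ∈ ⋃ z ∈ {z : Zcal J J₀ | memZj J J₀ j z}, B j z := by
              rw [this]; exact Set.mem_univ _
            simp only [Set.mem_iUnion, Set.mem_setOf_eq, exists_prop] at hx1
            obtain ⟨z, hz1, hz2⟩ := hx1
            exact ⟨z, hz1, hz2, hx.1, hx.2⟩
        · intro z hz z' hz' hzz'
          refine Set.disjoint_left.mpr fun x hx hx' => ?_
          exact Set.disjoint_left.mp
            (hBd j z z' (Finset.mem_filter.mp hz).2 (Finset.mem_filter.mp hz').2 hzz')
            hx.1 hx'.1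
        · intro z _
          exact meas_set _ (hBm j z) j Z0
      _ = 1 := by
        simp_rw [div_eq_mul_inv, ← Finset.sum_mul]
        rw [sum_over_j P Z0, ← hpdef, ENNReal.mul_inv_cancel hp0 hpt]
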